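/- arXiv:2309.14263 — 4 statements merged into one kernel-verified Lean document; each statement's English description precedes it below -/
import Mathlib

section
/- If a linear system (C,A) with observability matrix O = [C; CA; ...; CA^{n-1}] satisfies rank([O; F]) = rank(O) for a functional matrix F, then the dual system with controllability matrix O^T satisfies rank(F·O^T) = rank(F). -/
/-!
The rank condition says that every vector killed by `O` is killed by `F`. If `O Fᵀ v = 0`, then
`w = Fᵀ v` lies in `ker O ⊆ ker F`, so `w ⬝ w = v ⬝ F w = 0` and `w = 0`. Hence `O Fᵀ` and `Fᵀ`
have the same kernel, hence the same rank; transposing gives `rank (F Oᵀ) = rank F`.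
-/

open Matrix LinearMap Module

namespace Matrix

variable {m n p R : Type*} [Fintype n]

section Field

variable [Field R]

theorem rank_add_finrank_ker_mulVecLin (M : Matrix m n R) :
    M.rank + finrank R (ker M.mulVecLin) = Fintype.card n := by
  rw [rank, finrank_range_add_finrank_ker, finrank_fintype_fun_eq_card]

theorem rank_eq_rank_of_ker_mulVecLin_eq {M : Matrix m n R} {N : Matrix p n R}
    (h : ker M.mulVecLin = ker N.mulVecLin) : M.rank = N.rank := by
  have hM := rank_add_finrank_ker_mulVecLin M
  have hN := rank_add_finrank_ker_mulVecLin N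
  rw [h] at hM
  omega

theorem ker_mulVecLin_fromRows (M : Matrix m n R) (N : Matrix p n R) :
    ker (fromRows M N).mulVecLin = ker M.mulVecLin ⊓ ker N.mulVecLin := by
  ext v
  simp [fromRows_mulVec, funext_iff, Sum.forall]

theorem ker_mulVecLin_le_of_rank_fromRows_eq {M : Matrix m n R} {N : Matrix p n R}
    (h : (fromRows M N).rank = M.rank) : ker M.mulVecLin ≤ ker N.mulVecLin := by
  have hfinrank : finrank R (ker (fromRows M N).mulVecLin) = finrank R (ker M.mulVecLin) := by
    have hMN := rank_add_finrank_ker_mulVecLin (fromRows M N)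
    have hM := rank_add_finrank_ker_mulVecLin M
    omega
  have hker := Submodule.eq_of_le_of_finrank_eq
    (ker_mulVecLin_fromRows M N ▸ inf_le_left) hfinrank
  rw [ker_mulVecLin_fromRows] at hker
  exact inf_eq_left.mp hker

end Field

section LinearOrderedField

variable [Fintype p] [Field R] [LinearOrder R] [IsStrictOrderedRing R]

theorem ker_mulVecLin_mul_transpose_of_ker_le {M : Matrix m n R} {N : Matrix p n R}
    (h : ker M.mulVecLin ≤ ker N.mulVecLin) :
    ker (M * Nᵀ).mulVecLin = ker Nᵀ.mulVecLin := by
  ext v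
  simp only [mem_ker, mulVecLin_apply, ← mulVec_mulVec]
  refine ⟨fun hv => ?_, fun hv => by rw [hv, mulVec_zero]⟩
  have hNw : N *ᵥ (Nᵀ *ᵥ v) = 0 := h hv
  rw [← dotProduct_self_eq_zero]
  nth_rw 1 [mulVec_transpose]
  rw [← dotProduct_mulVec, hNw, dotProduct_zero]

theorem rank_mul_transpose_of_ker_le [Fintype m] {M : Matrix m n R} {N : Matrix p n R}
    (h : ker M.mulVecLin ≤ ker N.mulVecLin) : (N * Mᵀ).rank = N.rank := by
  rw [← rank_transpose, transpose_mul, transpose_transpose,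
    rank_eq_rank_of_ker_mulVecLin_eq (ker_mulVecLin_mul_transpose_of_ker_le h), rank_transpose]

end LinearOrderedField

end Matrix

theorem weak_duality_rank_general (n q r : ℕ)
    (F : Matrix (Fin r) (Fin n) ℝ)
    (O : Matrix (Fin n × Fin q) (Fin n) ℝ)
    (hobs : (Matrix.fromRows O F).rank = O.rank) :
    (F * Oᵀ).rank = F.rank :=
  rank_mul_transpose_of_ker_le (ker_mulVecLin_le_of_rank_fromRows_eq hobs)

/-- Weak duality: functional observability of (C,A;F) implies
output controllability of the dual (Aᵀ,Cᵀ;F). -/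
theorem weak_duality_rank (n q r : ℕ)
    (A : Matrix (Fin n) (Fin n) ℝ) (C : Matrix (Fin q) (Fin n) ℝ)
    (F : Matrix (Fin r) (Fin n) ℝ)
    (O : Matrix (Fin n × Fin q) (Fin n) ℝ)
    (hO : O = Matrix.of fun p j => (C * A ^ (p.1 : ℕ)) p.2 j)
    (hobs : (Matrix.fromRows O F).rank = O.rank) :
    (F * Oᵀ).rank = F.rank :=
  weak_duality_rank_general n q r F O hobs
end

section
/- For real matrices O (m×n) and F (r×n), if rank([O; F]) = rank(O), then rank(F·O^T) = rank(F). -/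
/-!
The rank hypothesis says that every row of `F` lies in the row space of `O`, i.e. `F = C * O`
for some matrix `C`. Then `F * Fᵀ = (F * Oᵀ) * Cᵀ`, so over an ordered field
`rank F = rank (F * Fᵀ) ≤ rank (F * Oᵀ) ≤ rank F`.
-/

open Matrix Module Set Submodule

namespace Matrix

variable {K : Type*} {m m' n : Type*}

theorem range_row_fromRows (A : Matrix m n K) (B : Matrix m' n K) :
    range (fromRows A B).row = range A.row ∪ range B.row :=
  Set.Sum.elim_range A B

theorem span_row_le_of_rank_fromRows_eq [Field K] [Finite m] [Finite m'] [Fintype n]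
    {A : Matrix m n K} {B : Matrix m' n K} (h : (fromRows A B).rank = A.rank) :
    span K (range B.row) ≤ span K (range A.row) := by
  rw [rank_eq_finrank_span_row, rank_eq_finrank_span_row, range_row_fromRows,
    span_union] at h
  have hA : span K (range A.row) = span K (range A.row) ⊔ span K (range B.row) :=
    eq_of_le_of_finrank_le le_sup_left h.le
  exact hA ▸ le_sup_right

theorem exists_eq_mul_of_span_row_le [Semiring K] [Fintype m]
    {A : Matrix m n K} {B : Matrix m' n K} (h : span K (range B.row) ≤ span K (range A.row)) :
    ∃ C : Matrix m' m K, B = C * A := by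
  rw [← range_vecMulLinear A] at h
  choose C hC using fun i ↦ h (subset_span ⟨i, rfl⟩)
  exact ⟨C, funext fun i ↦ (hC i).symm⟩

theorem rank_mul_transpose_of_eq_mul [Field K] [LinearOrder K] [IsStrictOrderedRing K]
    [Fintype m] [Fintype m'] [Fintype n] {A : Matrix m n K} {B : Matrix m' n K}
    {C : Matrix m' m K} (hB : B = C * A) : (B * Aᵀ).rank = B.rank := by
  refine le_antisymm (rank_mul_le_left B Aᵀ) ?_
  calc B.rank = (B * Bᵀ).rank := (rank_self_mul_transpose B).symm
    _ = (B * Aᵀ * Cᵀ).rank := by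
      simp only [hB, transpose_mul, Matrix.mul_assoc]
    _ ≤ (B * Aᵀ).rank := rank_mul_le_left _ _

end Matrix

/-- If rank([O; F]) = rank(O) then rank(F·Oᵀ) = rank(F). -/
theorem rank_mul_transpose_of_rank_fromRows (m n r : ℕ)
    (O : Matrix (Fin m) (Fin n) ℝ) (F : Matrix (Fin r) (Fin n) ℝ)
    (h : (Matrix.fromRows O F).rank = O.rank) :
    (F * Oᵀ).rank = F.rank := by
  obtain ⟨C, hF⟩ := exists_eq_mul_of_span_row_le (span_row_le_of_rank_fromRows_eq h)
  exact rank_mul_transpose_of_eq_mul hF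
end

section
/- There exist real matrices O and F with rank(F·O^T) = rank(F) but rank([O; F]) > rank(O); hence output controllability of the dual does not imply functional observability. -/
/-!
Take `O = (1 0)` and `F = (1 1)`. Then `F Oᵀ = 1`, so `F Oᵀ` and `F` both have rank one; but the
row of `F` does not lie in the row space of `O`, so stacking them gives the invertible matrix
`!![1, 0; 1, 1]` of rank two.
-/

open Matrix

theorem Matrix.rank_eq_card_height_of_mul_eq_one {m n R : Type*} [Fintype m] [Fintype n]
    [DecidableEq m] [CommSemiring R] [StrongRankCondition R] {A : Matrix m n R} {B : Matrix n m R}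
    (h : A * B = 1) : A.rank = Fintype.card m :=
  le_antisymm A.rank_le_card_height (by simpa [h] using rank_mul_le_left A B)

/-- Output controllability of the dual does not imply functional
observability: there exist O, F with rank(F·Oᵀ) = rank(F) but
rank([O; F]) > rank(O). -/
theorem exists_output_ctrb_not_funct_obsv :
    ∃ (m n r : ℕ) (O : Matrix (Fin m) (Fin n) ℝ)
      (F : Matrix (Fin r) (Fin n) ℝ),
      (F * Oᵀ).rank = F.rank ∧ (Matrix.fromRows O F).rank > O.rank := by
  refine ⟨1, 2, 1, !![1, 0], !![1, 1], ?_, ?_⟩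
  · have hFO : !![(1 : ℝ), 1] * (!![(1 : ℝ), 0])ᵀ = 1 := by
      ext i j
      fin_cases i; fin_cases j
      simp [vecMul, dotProduct, Fin.sum_univ_two]
    rw [hFO, rank_one, rank_eq_card_height_of_mul_eq_one hFO]
  · have hstack : reindex finSumFinEquiv (Equiv.refl _) (fromRows !![(1 : ℝ), 0] !![1, 1]) =
        !![1, 0; 1, 1] := by
      ext i j
      fin_cases i <;> fin_cases j <;> rfl
    have hunit : IsUnit !![(1 : ℝ), 0; 1, 1] := by
      simp [isUnit_iff_isUnit_det, det_fin_two]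
    calc (!![(1 : ℝ), 0]).rank ≤ 1 := rank_le_height _
      _ < 2 := one_lt_two
      _ = (fromRows !![(1 : ℝ), 0] !![1, 1]).rank := by
        rw [← rank_reindex finSumFinEquiv (Equiv.refl _), hstack, rank_of_isUnit _ hunit,
          Fintype.card_fin]
end

section
/- With A = [[A11, 0], [A21, A22]], B = [0; B2], and F = [[F1, 0], [0, F2]] in compatible block form, rank(F·𝒞) = rank(F2·𝒞2) ≤ r − r1, where 𝒞 is the controllability matrix of (A,B), 𝒞2 that of (A22,B2), r is the number of rows of F and r1 the number of rows of F1. In particular, if r1 > 0 (some target node has no path from any driver), then rank(F·𝒞) < rank(F) whenever rank(F) = r. -/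
/-!
Since `A` is block lower triangular, the unreached states are never driven by the reached ones,
and `B` does not act on them directly: every column `Aʲ B` of the controllability matrix vanishes
on the first block, while on the second block it is `A₂₂ʲ B₂`. Hence `F 𝒞` is `F₂ 𝒞₂` padded
with `r₁` zero rows, which leaves at most `r₂ < r₁ + r₂` independent rows.
-/

open Matrix

namespace Matrix

variable {R l m n o : Type*}

theorem rank_fromRows_zero_left [CommSemiring R] [StrongRankCondition R]
    [Fintype m] [Fintype n] [DecidableEq n] [Fintype o] (M : Matrix n o R) :
    (fromRows (0 : Matrix m o R) M).rank = M.rank := by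
  apply le_antisymm
  · have h : fromRows (0 : Matrix m o R) M =
        fromRows (0 : Matrix m n R) (1 : Matrix n n R) * M := by
      simp
    exact h ▸ rank_mul_le_right _ _
  · have h : M =
        fromCols (0 : Matrix n m R) (1 : Matrix n n R) * fromRows (0 : Matrix m o R) M := by
      rw [fromCols_mul_fromRows]; simp
    conv_lhs => rw [h]
    exact rank_mul_le_right _ _

theorem fromBlocks_zero₁₂_pow_mul_fromRows_zero [Semiring R] [Fintype l] [Fintype m]
    [DecidableEq l] [DecidableEq m] (A₁₁ : Matrix l l R) (A₂₁ : Matrix m l R)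
    (A₂₂ : Matrix m m R) (B : Matrix m n R) (j : ℕ) :
    fromBlocks A₁₁ 0 A₂₁ A₂₂ ^ j * fromRows (0 : Matrix l n R) B = fromRows 0 (A₂₂ ^ j * B) := by
  induction j with
  | zero => simp
  | succ j ih => simp [pow_succ', Matrix.mul_assoc, ih, fromBlocks_mul_fromRows]

/-- `[B, AB, …, A^(N-1) B]`, with column `(j, c)` the `c`-th column of `Aʲ B`. -/
def ctrbMatrix [Semiring R] [Fintype n] [DecidableEq n] (N : ℕ) (A : Matrix n n R)
    (B : Matrix n o R) : Matrix n (Fin N × o) R :=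
  of fun i jc => (A ^ (jc.1 : ℕ) * B) i jc.2

theorem ctrbMatrix_fromBlocks_zero₁₂_fromRows_zero [Semiring R] [Fintype l] [Fintype m]
    [DecidableEq l] [DecidableEq m] (N : ℕ) (A₁₁ : Matrix l l R) (A₂₁ : Matrix m l R)
    (A₂₂ : Matrix m m R) (B : Matrix m o R) :
    ctrbMatrix N (fromBlocks A₁₁ 0 A₂₁ A₂₂) (fromRows (0 : Matrix l o R) B) =
      fromRows 0 (ctrbMatrix N A₂₂ B) := by
  ext (i | i) ⟨j, c⟩ <;>
    simp [ctrbMatrix, fromBlocks_zero₁₂_pow_mul_fromRows_zero]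

end Matrix

/-- Necessity of the path condition: with A block lower triangular,
B = [0; B2] and F = [[F1,0],[0,F2]], rank(F𝒞) = rank(F2·𝒞₂) ≤ r − r1;
if r1 > 0 and F has full row rank then rank(F𝒞) < rank(F). -/
theorem output_ctrb_fails_without_paths (k m p r1 r2 : ℕ)
    (A11 : Matrix (Fin k) (Fin k) ℝ) (A21 : Matrix (Fin m) (Fin k) ℝ)
    (A22 : Matrix (Fin m) (Fin m) ℝ) (B2 : Matrix (Fin m) (Fin p) ℝ)
    (F1 : Matrix (Fin r1) (Fin k) ℝ) (F2 : Matrix (Fin r2) (Fin m) ℝ)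
    (A : Matrix (Fin k ⊕ Fin m) (Fin k ⊕ Fin m) ℝ)
    (hA : A = Matrix.fromBlocks A11 0 A21 A22)
    (B : Matrix (Fin k ⊕ Fin m) (Fin p) ℝ)
    (hB : B = Matrix.fromRows 0 B2)
    (F : Matrix (Fin r1 ⊕ Fin r2) (Fin k ⊕ Fin m) ℝ)
    (hF : F = Matrix.fromBlocks F1 0 0 F2)
    (𝒞 : Matrix (Fin k ⊕ Fin m) (Fin (k + m) × Fin p) ℝ)
    (h𝒞 : 𝒞 = Matrix.of fun i jc => (A ^ (jc.1 : ℕ) * B) i jc.2)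
    (𝒞₂ : Matrix (Fin m) (Fin (k + m) × Fin p) ℝ)
    (h𝒞₂ : 𝒞₂ = Matrix.of fun i jc => (A22 ^ (jc.1 : ℕ) * B2) i jc.2) :
    (F * 𝒞).rank = (F2 * 𝒞₂).rank ∧
    (F * 𝒞).rank ≤ r2 ∧
    (0 < r1 → F.rank = r1 + r2 → (F * 𝒞).rank < F.rank) := by
  have h𝒞_blocks : 𝒞 = fromRows 0 𝒞₂ := by
    rw [h𝒞, h𝒞₂, hA, hB]
    exact ctrbMatrix_fromBlocks_zero₁₂_fromRows_zero _ A11 A21 A22 B2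
  have hF𝒞 : F * 𝒞 = fromRows 0 (F2 * 𝒞₂) := by
    simp [hF, h𝒞_blocks, fromBlocks_mul_fromRows]
  have hrank : (F * 𝒞).rank = (F2 * 𝒞₂).rank := hF𝒞 ▸ rank_fromRows_zero_left _
  have hle : (F * 𝒞).rank ≤ r2 := by
    simpa [hrank] using (F2 * 𝒞₂).rank_le_card_height
  exact ⟨hrank, hle, fun hr1 hFrank => by omega⟩
end
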